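/- arXiv:2002.12139 — 5 statements merged into one kernel-verified Lean document; each statement's English description precedes it below -/
import Mathlib

section
/- If n = p^k m^2 is an odd perfect number with p prime, gcd(p, m) = 1, and p ≡ k ≡ 1 (mod 4), then σ(m^2)/p^k = 2m^2/σ(p^k) and this common value equals gcd(m^2, σ(m^2)). -/
/-!
By multiplicativity, `σ(p^k) σ(m^2) = 2 p^k m^2`. Since `σ(p^k) ≡ 1 (mod p)`, it is prime to `p^k`,
so `p^k ∣ σ(m^2)`; write `σ(m^2) = p^k d`. As `p` and `k` are odd, `σ(p^k) = 2u` is even, and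
cancelling gives `u d = m^2`. Hence `d = 2m^2/σ(p^k)`, and `d = gcd(m^2, p^k d)` because `p^k` is
prime to `m^2`.
-/

open ArithmeticFunction
open scoped ArithmeticFunction.sigma

namespace Nat

theorem Prime.coprime_sigma_one_pow {p : ℕ} (hp : p.Prime) (k : ℕ) :
    p.Coprime (σ 1 (p ^ k)) := by
  have := Fact.mk hp
  rw [hp.coprime_iff_not_dvd, ← ZMod.natCast_eq_zero_iff, sigma_one_apply_prime_pow hp]
  simp [Finset.sum_range_succ']

theorem even_sigma_one_prime_pow {p k : ℕ} (hp : p.Prime) (hp_odd : Odd p) (hk : Odd k) :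
    Even (σ 1 (p ^ k)) := by
  rw [← ZMod.natCast_eq_zero_iff_even, sigma_one_apply_prime_pow hp]
  simp [(ZMod.natCast_eq_one_iff_odd).2 hp_odd, (ZMod.natCast_eq_zero_iff_even).2 hk.add_one]

section
variable {a b u B : ℕ}

theorem mul_div_eq_of_mul_eq_mul (ha : a ≠ 0) (hau : a.Coprime u) (h : u * B = a * b) :
    u * (B / a) = b := by
  obtain ⟨d, rfl⟩ : a ∣ B := hau.dvd_of_dvd_mul_left ⟨b, h⟩
  rw [Nat.mul_div_cancel_left _ (Nat.pos_of_ne_zero ha)]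
  exact Nat.eq_of_mul_eq_mul_left (Nat.pos_of_ne_zero ha) (by rw [← h]; ring)

theorem gcd_eq_div_of_mul_eq_mul (ha : a ≠ 0) (hau : a.Coprime u) (hab : a.Coprime b)
    (h : u * B = a * b) : gcd b B = B / a := by
  have hdb := mul_div_eq_of_mul_eq_mul ha hau h
  obtain ⟨d, rfl⟩ : a ∣ B := hau.dvd_of_dvd_mul_left ⟨b, h⟩
  rw [Nat.mul_div_cancel_left _ (Nat.pos_of_ne_zero ha)] at hdb ⊢
  refine dvd_antisymm ?_ (dvd_gcd ⟨u, by rw [← hdb, mul_comm]⟩ (dvd_mul_left d a))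
  exact (hab.coprime_dvd_right (gcd_dvd_left b _)).symm.dvd_of_dvd_mul_left (gcd_dvd_right b _)

end

end Nat

theorem stmt_0_general (p k m : ℕ) (hp : p.Prime) (hk1 : k % 4 = 1) (hp1 : p % 4 = 1)
    (hco : Nat.Coprime p m)
    (hperf : ArithmeticFunction.sigma 1 (p ^ k * m ^ 2) = 2 * (p ^ k * m ^ 2)) :
    ArithmeticFunction.sigma 1 (m ^ 2) / p ^ k = 2 * m ^ 2 / ArithmeticFunction.sigma 1 (p ^ k) ∧
    ArithmeticFunction.sigma 1 (m ^ 2) / p ^ k = Nat.gcd (m ^ 2) (ArithmeticFunction.sigma 1 (m ^ 2)) := by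
  have hσ : σ 1 (p ^ k) * σ 1 (m ^ 2) = 2 * (p ^ k * m ^ 2) := by
    rw [← isMultiplicative_sigma.map_mul_of_coprime (hco.pow k 2), hperf]
  have hpk : p ^ k ≠ 0 := pow_ne_zero k hp.ne_zero
  obtain ⟨u, hu⟩ := Nat.even_sigma_one_prime_pow (k := k) hp (Nat.odd_iff.2 (by omega))
    (Nat.odd_iff.2 (by omega))
  have hu0 : u ≠ 0 := by have := sigma_pos 1 _ hpk; omega
  have hcop : (p ^ k).Coprime u :=
    ((hp.coprime_sigma_one_pow k).coprime_dvd_right ⟨2, by omega⟩).pow_left k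
  have hmul : u * σ 1 (m ^ 2) = p ^ k * m ^ 2 := by rw [hu] at hσ; linarith
  refine ⟨?_, (Nat.gcd_eq_div_of_mul_eq_mul hpk hcop (hco.pow k 2) hmul).symm⟩
  have hd := Nat.mul_div_eq_of_mul_eq_mul hpk hcop hmul
  refine (Nat.div_eq_of_eq_mul_left (by omega) ?_).symm
  rw [hu]
  linarith

theorem stmt_0 (p k m : ℕ) (hp : p.Prime) (hk1 : k % 4 = 1) (hp1 : p % 4 = 1)
    (hm : 0 < m) (hco : Nat.Coprime p m) (hodd : Odd (p ^ k * m ^ 2))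
    (hperf : ArithmeticFunction.sigma 1 (p ^ k * m ^ 2) = 2 * (p ^ k * m ^ 2)) :
    ArithmeticFunction.sigma 1 (m ^ 2) / p ^ k = 2 * m ^ 2 / ArithmeticFunction.sigma 1 (p ^ k) ∧
    ArithmeticFunction.sigma 1 (m ^ 2) / p ^ k = Nat.gcd (m ^ 2) (ArithmeticFunction.sigma 1 (m ^ 2)) :=
  stmt_0_general p k m hp hk1 hp1 hco hperf
end

section
/- If n = p^k m^2 is an odd perfect number with special prime p, then D(m^2)/s(p^k) = gcd(m^2, σ(m^2)), where D(z) = 2z − σ(z) is the deficiency and s(z) = σ(z) − z is the sum of aliquot divisors. -/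
/-!
Write `σ(p^k) = 2u`. Since `p^k` is coprime both to `m^2` and to `σ(p^k)`, perfection gives
`u σ(m^2) = p^k m^2` with `gcd(u, p^k) = 1`, so `m^2 = u t` and `σ(m^2) = p^k t` with
`t = gcd(m^2, σ(m^2))`. Then `D(m^2) = (2u - p^k) t = s(p^k) t`, and `s(p^k) > 0`.
-/

def D (z : ℕ) : ℕ := 2 * z - ArithmeticFunction.sigma 1 z

def s (z : ℕ) : ℕ := ArithmeticFunction.sigma 1 z - z

open ArithmeticFunction
open scoped ArithmeticFunction.sigma

lemma s_eq_sum_properDivisors (n : ℕ) : s n = ∑ d ∈ n.properDivisors, d := by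
  rw [s, sigma_one_apply, Nat.sum_divisors_eq_sum_properDivisors_add_self, Nat.add_sub_cancel]

lemma s_pos {n : ℕ} (hn : 1 < n) : 0 < s n := by
  rw [s_eq_sum_properDivisors]
  exact Finset.sum_pos' (fun _ _ => Nat.zero_le _)
    ⟨1, Nat.one_mem_properDivisors_iff_one_lt.2 hn, one_pos⟩

lemma even_sigma_one_prime_pow {p k : ℕ} (hp : p.Prime) (hpo : Odd p) (hk : Odd k) :
    Even (σ 1 (p ^ k)) := by
  rw [sigma_one_apply_prime_pow hp, Finset.even_sum_iff_even_card_odd,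
    Finset.filter_true_of_mem fun i _ => hpo.pow, Finset.card_range]
  exact hk.add_one

lemma Nat.Prime.coprime_sigma_one_pow_s1 {p : ℕ} (hp : p.Prime) (k : ℕ) :
    (p ^ k).Coprime (σ 1 (p ^ k)) := by
  refine Nat.Coprime.pow_left k ?_
  -- `σ(p^k) = 1 + (1 + ⋯ + p^(k-1)) * p`
  rw [sigma_one_apply_prime_pow hp, Finset.sum_range_succ']
  simp only [pow_succ, pow_zero, ← Finset.sum_mul]
  exact (Nat.coprime_mul_right_add_right p 1 _).mpr (Nat.coprime_one_right p)

lemma D_eq_s_mul_gcd_of_perfect {q M : ℕ} (hcop : q.Coprime M)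
    (hperf : σ 1 (q * M) = 2 * (q * M)) (heven : Even (σ 1 q)) (hq : q.Coprime (σ 1 q)) :
    D M = s q * M.gcd (σ 1 M) := by
  obtain ⟨u, hu⟩ := heven
  have hmul : u * σ 1 M = q * M := by
    rw [isMultiplicative_sigma.map_mul_of_coprime hcop, hu] at hperf
    linarith
  have huq : u.Coprime q := (hq.coprime_dvd_right ⟨2, by omega⟩).symm
  have hu0 : 0 < u := by
    refine Nat.pos_of_ne_zero ?_
    rintro rfl
    rw [Nat.coprime_zero_left] at huq
    simp [huq] at hu
  obtain ⟨t, ht⟩ : u ∣ M := huq.dvd_of_dvd_mul_left ⟨_, hmul.symm⟩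
  have hσ : σ 1 M = q * t :=
    Nat.eq_of_mul_eq_mul_left hu0 (by rw [hmul, ht]; ring)
  have hgcd : M.gcd (σ 1 M) = t := by
    rw [hσ, ht, mul_comm u, mul_comm q, Nat.gcd_mul_left, huq.gcd_eq_one, mul_one]
  rw [D, s, hgcd, hσ, hu, ht, Nat.sub_mul, two_mul, add_mul]

theorem stmt_1_general (p k m : ℕ) (hp : p.Prime) (hk1 : k % 4 = 1) (hp1 : p % 4 = 1)
    (hco : Nat.Coprime p m)
    (hperf : ArithmeticFunction.sigma 1 (p ^ k * m ^ 2) = 2 * (p ^ k * m ^ 2)) :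
    D (m ^ 2) / s (p ^ k) = Nat.gcd (m ^ 2) (ArithmeticFunction.sigma 1 (m ^ 2)) := by
  have hpodd : Odd p := Nat.odd_iff.2 (by omega)
  have hkodd : Odd k := Nat.odd_iff.2 (by omega)
  rw [D_eq_s_mul_gcd_of_perfect (hco.pow k 2) hperf (even_sigma_one_prime_pow hp hpodd hkodd)
    (hp.coprime_sigma_one_pow_s1 k),
    Nat.mul_div_cancel_left _ (s_pos (Nat.one_lt_pow (by omega) hp.one_lt))]

theorem stmt_1 (p k m : ℕ) (hp : p.Prime) (hk1 : k % 4 = 1) (hp1 : p % 4 = 1)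
    (hm : 0 < m) (hco : Nat.Coprime p m) (hodd : Odd (p ^ k * m ^ 2))
    (hperf : ArithmeticFunction.sigma 1 (p ^ k * m ^ 2) = 2 * (p ^ k * m ^ 2)) :
    D (m ^ 2) / s (p ^ k) = Nat.gcd (m ^ 2) (ArithmeticFunction.sigma 1 (m ^ 2)) :=
  stmt_1_general p k m hp hk1 hp1 hco hperf
end

section
/- If n = p^k m^2 is an odd perfect number with special prime p, then 2·D(m^2)·s(m^2) = D(p^k)·s(p^k)·(gcd(m^2, σ(m^2)))^2. -/
/-!
Multiplicativity gives σ(p^k) σ(m²) = 2 p^k m². Since σ(p^k) ≡ 1 (mod p) and σ(p^k) = 2a is even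
(a sum of k + 1 odd terms), p^k divides σ(m²) = p^k w, and then m² = a w with gcd(a, p^k) = 1, so
gcd(m², σ(m²)) = w. Both sides of the identity equal 2 (2a - p^k)(p^k - a) w².
-/

open ArithmeticFunction
open scoped ArithmeticFunction.sigma

theorem Nat.Prime.coprime_pow_sigma_one_pow {p : ℕ} (hp : p.Prime) (k : ℕ) :
    Nat.Coprime (p ^ k) (σ 1 (p ^ k)) := by
  rw [sigma_one_apply_prime_pow hp, Finset.sum_range_succ', pow_zero]
  simp only [pow_succ', ← Finset.mul_sum]
  exact (Nat.coprime_mul_left_add_right p 1 _).mpr (Nat.coprime_one_right p) |>.pow_left k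

theorem Nat.Prime.even_sigma_one_pow {p k : ℕ} (hp : p.Prime) (hp_odd : Odd p) (hk : Odd k) :
    Even (σ 1 (p ^ k)) := by
  rw [sigma_one_apply_prime_pow hp, Finset.even_sum_iff_even_card_odd,
    Finset.filter_true_of_mem fun i _ ↦ hp_odd.pow, Finset.card_range]
  exact hk.add_one

theorem two_mul_D_mul_s_eq_of_perfect {x y : ℕ} (hxy : x.Coprime y)
    (hperf : σ 1 (x * y) = 2 * (x * y)) (hx : x.Coprime (σ 1 x)) (heven : Even (σ 1 x)) :
    2 * (D y * s y) = D x * s x * Nat.gcd y (σ 1 y) ^ 2 := by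
  have hx0 : 0 < x := Nat.pos_of_ne_zero (by rintro rfl; simp at hx)
  obtain ⟨a, ha⟩ := even_iff_two_dvd.mp heven
  have hmul : σ 1 x * σ 1 y = 2 * (x * y) := by
    rw [← isMultiplicative_sigma.map_mul_of_coprime hxy, hperf]
  obtain ⟨w, hw⟩ : x ∣ σ 1 y := hx.dvd_of_dvd_mul_left ⟨2 * y, by rw [hmul]; ring⟩
  have hy : y = a * w := by
    rw [ha, hw] at hmul
    apply Nat.eq_of_mul_eq_mul_left (show 0 < 2 * x by omega)
    linarith
  have hgcd : Nat.gcd y (σ 1 y) = w := by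
    have hax : a.Coprime x := hx.symm.coprime_dvd_left (ha ▸ dvd_mul_left a 2)
    rw [hw, hy, Nat.gcd_mul_right, hax.gcd_eq_one, one_mul]
  simp only [D, s]
  rw [hgcd, hw, ha, hy, show 2 * (a * w) = 2 * a * w by ring, ← Nat.sub_mul, ← Nat.sub_mul,
    ← Nat.mul_sub]
  ring

theorem stmt_4_general (p k m : ℕ) (hp : p.Prime) (hk1 : k % 4 = 1) (hp1 : p % 4 = 1)
    (hco : Nat.Coprime p m)
    (hperf : ArithmeticFunction.sigma 1 (p ^ k * m ^ 2) = 2 * (p ^ k * m ^ 2)) :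
    2 * (D (m ^ 2) * s (m ^ 2)) = D (p ^ k) * s (p ^ k) * Nat.gcd (m ^ 2) (ArithmeticFunction.sigma 1 (m ^ 2)) ^ 2 :=
  two_mul_D_mul_s_eq_of_perfect (hco.pow k 2) hperf (hp.coprime_pow_sigma_one_pow k)
    (hp.even_sigma_one_pow (Nat.odd_iff.mpr (by omega)) (Nat.odd_iff.mpr (by omega)))

theorem stmt_4 (p k m : ℕ) (hp : p.Prime) (hk1 : k % 4 = 1) (hp1 : p % 4 = 1)
    (hm : 0 < m) (hco : Nat.Coprime p m) (hodd : Odd (p ^ k * m ^ 2))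
    (hperf : ArithmeticFunction.sigma 1 (p ^ k * m ^ 2) = 2 * (p ^ k * m ^ 2)) :
    2 * (D (m ^ 2) * s (m ^ 2)) = D (p ^ k) * s (p ^ k) * Nat.gcd (m ^ 2) (ArithmeticFunction.sigma 1 (m ^ 2)) ^ 2 :=
  stmt_4_general p k m hp hk1 hp1 hco hperf
end

section
/- If n = p^k m^2 is an odd perfect number with special prime p, then σ(m^2) ≡ 1 (mod 4) holds if and only if p ≡ k (mod 8). -/
/-!
Reduce `σ(p^k) σ(m²) = 2 p^k m²` modulo 8. Odd squares are `1 mod 8`, so `p^k ≡ p`, `m² ≡ 1`,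
and the `k + 1` terms of `σ(p^k) = 1 + p + ⋯ + p^k` pair up to `σ(p^k) ≡ ((k + 1) / 2) (1 + p)`.
Writing `k = 4t + 1` leaves `(2t + 1)(1 + p) σ(m²) ≡ 2p (mod 8)` with `p ≡ 1, 5 (mod 8)`, and a
finite check over the residues mod 8 gives the equivalence.
-/

open ArithmeticFunction Finset
open scoped ArithmeticFunction.sigma

theorem pow_eq_self_of_sq_eq_one {M : Type*} [Monoid M] {x : M} (hx : x ^ 2 = 1) {k : ℕ}
    (hk : Odd k) : x ^ k = x := by
  obtain ⟨j, rfl⟩ := hk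
  rw [pow_succ, pow_mul, hx, one_pow, one_mul]

theorem geom_sum_range_two_mul_of_sq_eq_one {R : Type*} [Semiring R] {x : R} (hx : x ^ 2 = 1)
    (s : ℕ) : ∑ i ∈ range (2 * s), x ^ i = s * (1 + x) := by
  induction s with
  | zero => simp
  | succ s ih =>
    have hx2s : x ^ (2 * s) = 1 := by rw [pow_mul, hx, one_pow]
    rw [mul_add_one, sum_range_succ, sum_range_succ, ih, pow_succ, hx2s, one_mul,
      Nat.cast_succ, add_one_mul, add_assoc]

theorem sigma_one_prime_pow_cast_of_sq_eq_one {R : Type*} [Semiring R] {p k : ℕ} (hp : p.Prime)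
    (hk : Odd k) (hpR : (p : R) ^ 2 = 1) :
    (σ 1 (p ^ k) : R) = ((k + 1) / 2 : ℕ) * (1 + p) := by
  obtain ⟨s, rfl⟩ := hk
  rw [sigma_one_apply_prime_pow hp, show 2 * s + 1 + 1 = 2 * (s + 1) by ring,
    Nat.mul_div_cancel_left _ two_pos]
  exact_mod_cast geom_sum_range_two_mul_of_sq_eq_one hpR _

theorem sq_natCast_zmod_eight_eq_one_of_odd {a : ℕ} (ha : Odd a) : (a : ZMod 8) ^ 2 = 1 := by
  obtain ⟨r, rfl⟩ := ha
  push_cast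
  generalize (r : ZMod 8) = x
  revert x
  decide

theorem natCast_zmod_eight_eq_one_or_five_iff {n : ℕ} :
    (n : ZMod 8) = 1 ∨ (n : ZMod 8) = 5 ↔ n % 4 = 1 := by
  rw [← ZMod.natCast_mod n 8, ← Nat.mod_mod_of_dvd n (by norm_num : 4 ∣ 8)]
  have h8 : n % 8 < 8 := Nat.mod_lt n (by norm_num)
  generalize n % 8 = r at h8
  interval_cases r <;> decide

theorem zmod_eight_eq_one_or_five_iff_of_mul_eq_two_mul :
    ∀ P T X : ZMod 8, (P = 1 ∨ P = 5) → (2 * T + 1) * (1 + P) * X = 2 * P →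
      ((X = 1 ∨ X = 5) ↔ P = 4 * T + 1) := by
  decide

theorem stmt_17_general (p k m : ℕ) (hp : p.Prime) (hk1 : k % 4 = 1) (hp1 : p % 4 = 1)
    (hco : Nat.Coprime p m) (hodd : Odd (p ^ k * m ^ 2))
    (hperf : ArithmeticFunction.sigma 1 (p ^ k * m ^ 2) = 2 * (p ^ k * m ^ 2)) :
    ArithmeticFunction.sigma 1 (m ^ 2) % 4 = 1 ↔ p % 8 = k % 8 := by
  have hp2 : (p : ZMod 8) ^ 2 = 1 :=
    sq_natCast_zmod_eight_eq_one_of_odd (Nat.odd_iff.mpr (by omega))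
  have hm2 : (m : ZMod 8) ^ 2 = 1 :=
    sq_natCast_zmod_eight_eq_one_of_odd (Nat.Odd.of_mul_right (Nat.odd_mul.mp hodd).2)
  obtain ⟨T, hk⟩ : ∃ T, k = 4 * T + 1 := ⟨k / 4, by omega⟩
  have hk_odd : Odd k := ⟨2 * T, by omega⟩
  have hperf8 : (2 * T + 1) * (1 + p) * (σ 1 (m ^ 2) : ZMod 8) = 2 * p := by
    have hsplit : σ 1 (p ^ k) * σ 1 (m ^ 2) = 2 * (p ^ k * m ^ 2) := by
      rwa [← isMultiplicative_sigma.map_mul_of_coprime (hco.pow k 2)]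
    have hsplit8 := congrArg (Nat.cast : ℕ → ZMod 8) hsplit
    push_cast at hsplit8
    rwa [sigma_one_prime_pow_cast_of_sq_eq_one hp hk_odd hp2, pow_eq_self_of_sq_eq_one hp2 hk_odd,
      hm2, mul_one, show (k + 1) / 2 = 2 * T + 1 by omega, Nat.cast_succ, Nat.cast_mul,
      Nat.cast_ofNat] at hsplit8
  rw [← natCast_zmod_eight_eq_one_or_five_iff, ← ZMod.natCast_eq_natCast_iff', hk]
  push_cast
  exact zmod_eight_eq_one_or_five_iff_of_mul_eq_two_mul _ _ _
    (natCast_zmod_eight_eq_one_or_five_iff.mpr hp1) hperf8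

theorem stmt_17 (p k m : ℕ) (hp : p.Prime) (hk1 : k % 4 = 1) (hp1 : p % 4 = 1)
    (hm : 0 < m) (hco : Nat.Coprime p m) (hodd : Odd (p ^ k * m ^ 2))
    (hperf : ArithmeticFunction.sigma 1 (p ^ k * m ^ 2) = 2 * (p ^ k * m ^ 2)) :
    ArithmeticFunction.sigma 1 (m ^ 2) % 4 = 1 ↔ p % 8 = k % 8 :=
  stmt_17_general p k m hp hk1 hp1 hco hodd hperf
end

section
/- If n = p^k m^2 is an odd perfect number with special prime p, σ(m^2)/p^k is a perfect square, and k = 1, then p ≡ 1 (mod 8); in particular p ≥ 17. -/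
/-!
With `k = 1`, multiplicativity gives `(p + 1) σ(m²) = 2 p m²`; as `p` is coprime to `p + 1`,
`σ(m²) = p c²` where `c²` is the assumed square `σ(m²)/p`. Cancelling `p` leaves
`((p + 1)/2) c² = m²`, so `(p + 1)/2 = d²` and `p = 2d² - 1`. Since `p ≡ 1 (mod 4)`, `d` is odd,
whence `d² ≡ 1` and `p ≡ 1 (mod 8)`; the only smaller candidate `9` is not prime.
-/

open ArithmeticFunction
open scoped ArithmeticFunction.sigma

theorem ArithmeticFunction.sigma_one_prime_mul {p n : ℕ} (hp : p.Prime) (hpn : p.Coprime n) :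
    σ 1 (p * n) = (p + 1) * σ 1 n := by
  rw [isMultiplicative_sigma.map_mul_of_coprime hpn, sigma_one_apply, hp.divisors,
    Finset.sum_pair hp.one_lt.ne, add_comm]

theorem Nat.isSquare_of_mul_sq_eq_sq {u c m : ℕ} (hc : c ≠ 0) (h : u * c ^ 2 = m ^ 2) :
    IsSquare u := by
  obtain ⟨d, rfl⟩ : c ∣ m := (Nat.pow_dvd_pow_iff two_ne_zero).mp ⟨u, by rw [← h, mul_comm]⟩
  refine ⟨d, Nat.eq_of_mul_eq_mul_right (pow_pos (Nat.pos_of_ne_zero hc) 2) ?_⟩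
  rw [h]; ring

theorem Nat.mod_eight_eq_one_of_add_one_eq_two_mul_sq {p d : ℕ} (hp : p % 4 = 1)
    (h : p + 1 = 2 * d ^ 2) : p % 8 = 1 := by
  have hd : d ^ 2 % 8 = (d % 8) ^ 2 % 8 := Nat.pow_mod d 2 8
  have : d % 8 < 8 := Nat.mod_lt d (by norm_num)
  interval_cases d % 8 <;> omega

theorem Nat.Prime.seventeen_le_of_mod_eight_eq_one {p : ℕ} (hp : p.Prime) (h : p % 8 = 1) :
    17 ≤ p := by
  by_contra! hlt
  interval_cases p <;> first | omega | norm_num at hp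

theorem stmt_19_general (p k m : ℕ) (hp : p.Prime) (hp1 : p % 4 = 1)
    (hm : 0 < m) (hco : Nat.Coprime p m)
    (hperf : ArithmeticFunction.sigma 1 (p ^ k * m ^ 2) = 2 * (p ^ k * m ^ 2))
    (hsq : IsSquare (ArithmeticFunction.sigma 1 (m ^ 2) / p ^ k)) (hk : k = 1) :
    p % 8 = 1 ∧ 17 ≤ p := by
  subst hk
  rw [pow_one] at hperf hsq
  have hσ : (p + 1) * σ 1 (m ^ 2) = p * (2 * m ^ 2) := by
    rw [← sigma_one_prime_mul hp (hco.pow_right 2), hperf, mul_left_comm]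
  have hdvd : p ∣ σ 1 (m ^ 2) :=
    (Nat.coprime_self_add_right.mpr (Nat.coprime_one_right p)).dvd_of_dvd_mul_left ⟨_, hσ⟩
  obtain ⟨c, hc⟩ := hsq
  rw [← Nat.mul_div_cancel' hdvd, hc, mul_left_comm] at hσ
  obtain ⟨u, hu⟩ : ∃ u, p + 1 = 2 * u := ⟨(p + 1) / 2, by omega⟩
  have huc : u * c ^ 2 = m ^ 2 := by
    rw [hu, mul_assoc] at hσ
    rw [sq c]
    exact Nat.eq_of_mul_eq_mul_left (by norm_num) (Nat.eq_of_mul_eq_mul_left hp.pos hσ)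
  have hc0 : c ≠ 0 := by
    rintro rfl
    exact hm.ne' (pow_eq_zero_iff two_ne_zero |>.mp (by simpa using huc.symm))
  obtain ⟨d, rfl⟩ := Nat.isSquare_of_mul_sq_eq_sq hc0 huc
  have hp8 := Nat.mod_eight_eq_one_of_add_one_eq_two_mul_sq hp1 (d := d) (by rw [hu, sq])
  exact ⟨hp8, hp.seventeen_le_of_mod_eight_eq_one hp8⟩

theorem stmt_19 (p k m : ℕ) (hp : p.Prime) (hk1 : k % 4 = 1) (hp1 : p % 4 = 1)
    (hm : 0 < m) (hco : Nat.Coprime p m) (hodd : Odd (p ^ k * m ^ 2))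
    (hperf : ArithmeticFunction.sigma 1 (p ^ k * m ^ 2) = 2 * (p ^ k * m ^ 2))
    (hsq : IsSquare (ArithmeticFunction.sigma 1 (m ^ 2) / p ^ k)) (hk : k = 1) :
    p % 8 = 1 ∧ 17 ≤ p :=
  stmt_19_general p k m hp hp1 hm hco hperf hsq hk
end
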